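/- Let R be an algebraic curvature tensor on ℝ^n, n ≥ 4, lying in the PIC1 cone, and let {e_i}_{i=1}^n be an orthonormal basis with Ric(e₁,e₁) = Σ_{i=2}^n R(e₁,e_i,e₁,e_i) = 0. Then for all i, j > 1 with i ≠ j, R(e₁,e_i,e₁,e_i) + R(e₁,e_j,e₁,e_j) = 0. -/
import Mathlib


open scoped ComplexOrder

noncomputable section

/-- `ℂⁿ`, the complexification of `ℝⁿ`. -/
abbrev CV (n : ℕ) := Fin n → ℂ

/-- The complex-bilinear extension of the standard inner product on `ℝⁿ`. -/
def Ic {n : ℕ} (v w : CV n) : ℂ := ∑ i, v i * w i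

/-- Complex quadrilinear maps on `ℂⁿ`. -/
abbrev CurvMap (n : ℕ) := ContinuousMultilinearMap ℂ (fun _ : Fin 4 => CV n) ℂ

/-- `R` is (the complexification of) an algebraic curvature tensor. -/
def IsAlgCurv {n : ℕ} (R : CurvMap n) : Prop :=
  (∀ v w x y : CV n, R ![v, w, x, y] = - R ![w, v, x, y]) ∧
  (∀ v w x y : CV n, R ![v, w, x, y] = R ![x, y, v, w]) ∧
  (∀ v w x y : CV n, R ![v, w, x, y] + R ![w, x, v, y] + R ![x, v, w, y] = 0) ∧
  (∀ v w x y : CV n, R ![star v, star w, star x, star y] = star (R ![v, w, x, y]))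

/-- The simple 2-vector `ω = v ∧ w` is isotropic. -/
def SimpleIsotropic {n : ℕ} (v w : CV n) : Prop :=
  Ic v v * Ic w w - (Ic v w) ^ 2 = 0

/-- The PIC1 cone. -/
def CPIC1 (n : ℕ) : Set (CurvMap n) :=
  {R | IsAlgCurv R ∧
    ∀ v w : CV n, SimpleIsotropic v w → 0 ≤ R ![v, w, star v, star w]}

lemma Ic_expand {n : ℕ} (a b : CV n) (c : ℂ) :
    Ic (a + c • b) (a + c • b) = Ic a a + c * Ic a b + c * Ic b a + c * c * Ic b b := by
  simp only [Ic, Pi.add_apply, Pi.smul_apply, smul_eq_mul, Finset.mul_sum,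
    ← Finset.sum_add_distrib]
  exact Finset.sum_congr rfl fun k _ => by ring

lemma Ic_add_smul_right {n : ℕ} (a b d : CV n) (c : ℂ) :
    Ic a (b + c • d) = Ic a b + c * Ic a d := by
  simp only [Ic, Pi.add_apply, Pi.smul_apply, smul_eq_mul, Finset.mul_sum,
    ← Finset.sum_add_distrib]
  exact Finset.sum_congr rfl fun k _ => by ring

lemma slot1 {n : ℕ} (R : CurvMap n) (v a b x y : CV n) (c : ℂ) :
    R ![v, a + c • b, x, y] = R ![v, a, x, y] + c * R ![v, b, x, y] := by
  have h : ∀ z : CV n, ![v, z, x, y] = Function.update ![v, a, x, y] 1 z := by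
    intro z; funext k; fin_cases k <;> simp
  rw [h _, R.map_update_add, R.map_update_smul, ← h a, ← h b, smul_eq_mul]

lemma slot3 {n : ℕ} (R : CurvMap n) (v w x a b : CV n) (c : ℂ) :
    R ![v, w, x, a + c • b] = R ![v, w, x, a] + c * R ![v, w, x, b] := by
  have h : ∀ z : CV n, ![v, w, x, z] = Function.update ![v, w, x, a] 3 z := by
    intro z; funext k; fin_cases k <;> simp
  rw [h _, R.map_update_add, R.map_update_smul, ← h a, ← h b, smul_eq_mul]

/-- Let `R` be an algebraic curvature tensor on `ℝⁿ`, `n ≥ 4`, lying in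
the PIC1 cone, and let `{e_i}` be a (real) orthonormal basis with
`Ric(e₁,e₁) = Σ_{i≠1} R(e₁,e_i,e₁,e_i) = 0`. Then for all `i ≠ j` both different from `1`,
`R(e₁,e_i,e₁,e_i) + R(e₁,e_j,e₁,e_j) = 0`. (Here `n = m + 4` encodes `n ≥ 4`.) -/
theorem stmt12 (m : ℕ) (R : CurvMap (m + 4)) (hR : R ∈ CPIC1 (m + 4))
    (e : Fin (m + 4) → CV (m + 4))
    (horth : ∀ i j, Ic (e i) (e j) = if i = j then 1 else 0)
    (hreal : ∀ i, star (e i) = e i)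
    (hric : (∑ i ∈ Finset.univ.erase (0 : Fin (m + 4)),
        R ![e 0, e i, e 0, e i]) = 0) :
    ∀ i j : Fin (m + 4), i ≠ 0 → j ≠ 0 → i ≠ j →
      R ![e 0, e i, e 0, e i] + R ![e 0, e j, e 0, e j] = 0 := by
  set f : Fin (m + 4) → ℂ := fun k => R ![e 0, e k, e 0, e k] with hf
  -- pairwise nonnegativity
  have hpair : ∀ i j : Fin (m + 4), i ≠ 0 → j ≠ 0 → i ≠ j → 0 ≤ f i + f j := by
    intro i j hi hj hij
    set w : CV (m + 4) := e i + Complex.I • e j with hw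
    have hiso : SimpleIsotropic (e 0) w := by
      unfold SimpleIsotropic
      rw [hw, Ic_expand, Ic_add_smul_right]
      simp only [horth, if_pos rfl, if_neg hij, if_neg hij.symm, if_neg (Ne.symm hi),
        if_neg (Ne.symm hj)]
      ring_nf
      rw [Complex.I_sq]
      ring
    have hpic := hR.2 (e 0) w hiso
    have hsw : star w = e i + (-Complex.I) • e j := by
      rw [hw, star_add, star_smul, hreal, hreal, Complex.star_def, Complex.conj_I]
    rw [hreal 0, hsw, hw, slot1, slot3, slot3] at hpic
    have hsym : R ![e 0, e j, e 0, e i] = R ![e 0, e i, e 0, e j] :=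
      hR.1.2.1 (e 0) (e j) (e 0) (e i)
    rw [hsym] at hpic
    have : R ![e 0, e i, e 0, e i] + -Complex.I * R ![e 0, e i, e 0, e j] +
        Complex.I * (R ![e 0, e i, e 0, e j] + -Complex.I * R ![e 0, e j, e 0, e j]) =
        f i + f j := by
      rw [hf]; ring_nf; rw [Complex.I_sq]; ring
    rwa [this] at hpic
  -- summation argument
  set S := Finset.univ.erase (0 : Fin (m + 4)) with hS
  have hcard : S.card = m + 3 := by
    rw [hS, Finset.card_erase_of_mem (Finset.mem_univ _)]
    simp
  have hsum : ∑ a ∈ S, ∑ b ∈ S.erase a, (f a + f b) = 0 := by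
    have h1 : ∀ a ∈ S, ∑ b ∈ S.erase a, (f a + f b) = (m + 1 : ℂ) * f a := by
      intro a ha
      rw [Finset.sum_add_distrib, Finset.sum_const, Finset.sum_erase_eq_sub ha, hric,
        Finset.card_erase_of_mem ha, hcard]
      push_cast
      ring
    rw [Finset.sum_congr rfl h1, ← Finset.mul_sum, hric, mul_zero]
  have hmem : ∀ a ∈ S, a ≠ 0 := fun a ha => (Finset.mem_erase.mp ha).1
  have hnn : ∀ a ∈ S, 0 ≤ ∑ b ∈ S.erase a, (f a + f b) := by
    intro a ha
    refine Finset.sum_nonneg fun b hb => ?_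
    have hb' := Finset.mem_erase.mp hb
    exact hpair a b (hmem a ha) (hmem b hb'.2) (Ne.symm hb'.1)
  have hall := (Finset.sum_eq_zero_iff_of_nonneg hnn).mp hsum
  intro i j hi hj hij
  have hiS : i ∈ S := Finset.mem_erase.mpr ⟨hi, Finset.mem_univ _⟩
  have hjS : j ∈ S.erase i := Finset.mem_erase.mpr ⟨hij.symm,
    Finset.mem_erase.mpr ⟨hj, Finset.mem_univ _⟩⟩
  have hinner := hall i hiS
  have hnn2 : ∀ b ∈ S.erase i, 0 ≤ f i + f b := by
    intro b hb
    have hb' := Finset.mem_erase.mp hb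
    exact hpair i b hi (hmem b hb'.2) (Ne.symm hb'.1)
  exact (Finset.sum_eq_zero_iff_of_nonneg hnn2).mp hinner j hjS
end
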